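/- For any set of desirable options D, D is total if and only if the binary set of desirable option sets K_D is total, i.e., D is coherent and satisfies 'for all nonzero u, u ∈ D or −u ∈ D' if and only if K_D is coherent and contains {u, −u} for all nonzero u. -/

import Mathlib

/-- Axiom K0: removal of the zero option. -/
def AxK0 {V : Type*} [AddCommGroup V] [Module ℝ V] (K : Set (Set V)) : Prop :=
  ∀ A ∈ K, A \ {0} ∈ K

/-- Axiom K1: the singleton of zero is not a desirable option set. -/
def AxK1 {V : Type*} [AddCommGroup V] [Module ℝ V] (K : Set (Set V)) : Prop :=
  ({0} : Set V) ∉ K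

/-- Axiom K2: singletons of (background-)positive options are desirable option sets. -/
def AxK2 {V : Type*} [AddCommGroup V] [Module ℝ V] (Vpos : Set V) (K : Set (Set V)) : Prop :=
  ∀ u ∈ Vpos, ({u} : Set V) ∈ K

/-- Axiom K3: closure under elementwise positive combinations of two members. -/
def AxK3 {V : Type*} [AddCommGroup V] [Module ℝ V] (K : Set (Set V)) : Prop :=
  ∀ A1 ∈ K, ∀ A2 ∈ K, ∀ l m : V → V → ℝ,
    (∀ u ∈ A1, ∀ v ∈ A2, 0 ≤ l u v ∧ 0 ≤ m u v ∧ 0 < l u v + m u v) →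
    {w : V | ∃ u ∈ A1, ∃ v ∈ A2, w = l u v • u + m u v • v} ∈ K

/-- Axiom K4: upward closure under inclusion (within finite option sets). -/
def AxK4 {V : Type*} [AddCommGroup V] [Module ℝ V] (K : Set (Set V)) : Prop :=
  ∀ A1 ∈ K, ∀ A2 : Set V, A2.Finite → A1 ⊆ A2 → A2 ∈ K

/-- Coherence of a set of desirable option sets (a subset of the finite option sets). -/
def CoherentK {V : Type*} [AddCommGroup V] [Module ℝ V] (Vpos : Set V)
    (K : Set (Set V)) : Prop :=
  (∀ A ∈ K, A.Finite) ∧ AxK0 K ∧ AxK1 K ∧ AxK2 Vpos K ∧ AxK3 K ∧ AxK4 K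

/-- Coherence of a set of desirable options. -/
def CoherentD {V : Type*} [AddCommGroup V] [Module ℝ V] (Vpos D : Set V) : Prop :=
  (0 : V) ∉ D ∧ Vpos ⊆ D ∧
  ∀ u ∈ D, ∀ v ∈ D, ∀ l m : ℝ, 0 ≤ l → 0 ≤ m → 0 < l + m → l • u + m • v ∈ D

/-- `K_D`: the binary set of desirable option sets generated by `D`. -/
def KD {V : Type*} [AddCommGroup V] [Module ℝ V] (D : Set V) : Set (Set V) :=
  {A | A.Finite ∧ (A ∩ D).Nonempty}

/-- `D_K`: the set of options whose singletons belong to `K`. -/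
def DK {V : Type*} [AddCommGroup V] [Module ℝ V] (K : Set (Set V)) : Set V :=
  {u | ({u} : Set V) ∈ K}

/-- A set of desirable option sets is binary if it is determined by singleton assessments. -/
def BinaryK {V : Type*} [AddCommGroup V] [Module ℝ V] (K : Set (Set V)) : Prop :=
  ∀ A : Set V, A.Finite → (A ∈ K ↔ ∃ u ∈ A, ({u} : Set V) ∈ K)

/-- `posi S`: all finite positive linear combinations of elements of `S`. -/
def Posi {V : Type*} [AddCommGroup V] [Module ℝ V] (S : Set V) : Set V :=
  {w | ∃ n : ℕ, 0 < n ∧ ∃ (l : Fin n → ℝ) (u : Fin n → V),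
    (∀ k, 0 < l k) ∧ (∀ k, u k ∈ S) ∧ w = ∑ k, l k • u k}

/-- Total set of desirable options. -/
def TotalD {V : Type*} [AddCommGroup V] [Module ℝ V] (Vpos D : Set V) : Prop :=
  CoherentD Vpos D ∧ ∀ u : V, u ≠ 0 → u ∈ D ∨ -u ∈ D

/-- Total set of desirable option sets. -/
def TotalK {V : Type*} [AddCommGroup V] [Module ℝ V] (Vpos : Set V)
    (K : Set (Set V)) : Prop :=
  CoherentK Vpos K ∧ ∀ u : V, u ≠ 0 → ({u, -u} : Set V) ∈ K

/-- Mixing set of desirable options. -/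
def MixingD {V : Type*} [AddCommGroup V] [Module ℝ V] (Vpos D : Set V) : Prop :=
  CoherentD Vpos D ∧ ∀ A : Set V, A.Finite → (Posi A ∩ D).Nonempty → (A ∩ D).Nonempty

/-- Mixing set of desirable option sets. -/
def MixingK {V : Type*} [AddCommGroup V] [Module ℝ V] (Vpos : Set V)
    (K : Set (Set V)) : Prop :=
  CoherentK Vpos K ∧
    ∀ A B : Set V, A.Finite → B ∈ K → A ⊆ B → B ⊆ Posi A → A ∈ K

/-- `V_{≤0}`: the non-positive options (zero together with the strictly negative options). -/
def Vneg {V : Type*} [AddCommGroup V] [Module ℝ V] (Vpos : Set V) : Set V :=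
  {u | u = 0 ∨ -u ∈ Vpos}

/-- The operator `RN`, adding smaller option sets by removing non-positive options. -/
def RN {V : Type*} [AddCommGroup V] [Module ℝ V] (Vpos : Set V)
    (K : Set (Set V)) : Set (Set V) :=
  {A | A.Finite ∧ ∃ B ∈ K, B \ Vneg Vpos ⊆ A ∧ A ⊆ B}

/-! A set lies in `K_D` exactly when one of its elements lies in `D`. So on singletons and on
pairs `{u, -u}` the axioms K1–K3 and totality for `K_D` say the same as coherence and totality
of `D`, while finiteness and K4 hold for every `K_D`, and K0 as soon as `0 ∉ D`. -/

section KD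

variable {V : Type*} [AddCommGroup V] [Module ℝ V] {D : Set V}

theorem singleton_mem_KD_iff {u : V} : ({u} : Set V) ∈ KD D ↔ u ∈ D := by
  simp [KD]

theorem pair_mem_KD_iff {u v : V} : ({u, v} : Set V) ∈ KD D ↔ u ∈ D ∨ v ∈ D := by
  simp [KD, Set.inter_nonempty]

theorem axK0_KD (h0 : (0 : V) ∉ D) : AxK0 (KD D) := by
  rintro A ⟨hA, u, hu, huD⟩
  exact ⟨hA.sdiff, u, ⟨hu, fun h => h0 (h ▸ huD)⟩, huD⟩

theorem axK1_KD_iff : AxK1 (KD D) ↔ (0 : V) ∉ D := by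
  rw [AxK1, singleton_mem_KD_iff]

theorem axK2_KD_iff {Vpos : Set V} : AxK2 Vpos (KD D) ↔ Vpos ⊆ D := by
  simp only [AxK2, singleton_mem_KD_iff, Set.subset_def]

theorem axK3_KD
    (hD : ∀ u ∈ D, ∀ v ∈ D, ∀ l m : ℝ, 0 ≤ l → 0 ≤ m → 0 < l + m → l • u + m • v ∈ D) :
    AxK3 (KD D) := by
  rintro A ⟨hA, u, hu, huD⟩ B ⟨hB, v, hv, hvD⟩ l m hlm
  have hsub : {w : V | ∃ u ∈ A, ∃ v ∈ B, w = l u v • u + m u v • v} ⊆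
      Set.image2 (fun u v => l u v • u + m u v • v) A B := by
    rintro w ⟨a, ha, b, hb, rfl⟩
    exact ⟨a, ha, b, hb, rfl⟩
  obtain ⟨hl, hm, hlm⟩ := hlm u hu v hv
  exact ⟨(hA.image2 _ hB).subset hsub, _, ⟨u, hu, v, hv, rfl⟩, hD u huD v hvD _ _ hl hm hlm⟩

theorem smul_add_smul_mem_of_axK3_KD (hK : AxK3 (KD D)) {u v : V} (hu : u ∈ D) (hv : v ∈ D)
    {l m : ℝ} (hl : 0 ≤ l) (hm : 0 ≤ m) (hlm : 0 < l + m) : l • u + m • v ∈ D := by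
  obtain ⟨-, w, ⟨a, ha, b, hb, rfl⟩, hwD⟩ :=
    hK _ (singleton_mem_KD_iff.mpr hu) _ (singleton_mem_KD_iff.mpr hv)
      (fun _ _ => l) (fun _ _ => m) (fun _ _ _ _ => ⟨hl, hm, hlm⟩)
  rwa [Set.mem_singleton_iff.mp ha, Set.mem_singleton_iff.mp hb] at hwD

theorem axK4_KD : AxK4 (KD D) := by
  rintro A ⟨-, u, hu, huD⟩ B hB hAB
  exact ⟨hB, u, hAB hu, huD⟩

theorem coherentK_KD_iff {Vpos : Set V} : CoherentK Vpos (KD D) ↔ CoherentD Vpos D := by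
  constructor
  · rintro ⟨-, -, hK1, hK2, hK3, -⟩
    exact ⟨axK1_KD_iff.mp hK1, axK2_KD_iff.mp hK2,
      fun u hu v hv _ _ => smul_add_smul_mem_of_axK3_KD hK3 hu hv⟩
  · rintro ⟨h0, hpos, hD⟩
    exact ⟨fun A hA => hA.1, axK0_KD h0, axK1_KD_iff.mpr h0, axK2_KD_iff.mpr hpos,
      axK3_KD hD, axK4_KD⟩

end KD

theorem stmt10 {V : Type*} [AddCommGroup V] [Module ℝ V]
    (Vpos D : Set V) :
    TotalD Vpos D ↔ TotalK Vpos (KD D) := by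
  simp only [TotalD, TotalK, coherentK_KD_iff, pair_mem_KD_iff]
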